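/- CSR socially qualified individuals in a profile where someone is universally qualified are exactly the vertices reachable from the universal-qualification individual: Let φ be a profile over finite N and a ∈ N with φ(b, a) = 1 for all b ∈ N. Then f^CSR(φ, N) = {a' ∈ N : there is a directed walk of length ≥ 0 from a to a' in the incidence digraph G_φ}. In particular f^CSR(φ, N) is nonempty and contains a. -/

import Mathlib

open Finset

def csrStep {α : Type*} [DecidableEq α] (φ : α → α → Bool) (W K : Finset α) : Finset α :=
  K ∪ W.filter (fun a => ∃ a' ∈ K, φ a' a = true)

def csrIter {α : Type*} [DecidableEq α] (φ : α → α → Bool) (W : Finset α) : ℕ → Finset α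
  | 0 => W.filter (fun a => ∀ a' ∈ W, φ a' a = true)
  | n + 1 => csrStep φ W (csrIter φ W n)

/-- The consensus-start-respecting rule. -/
def fCSR {α : Type*} [DecidableEq α] (φ : α → α → Bool) (W : Finset α) : Finset α :=
  csrIter φ W W.card

def lsrIter {α : Type*} [DecidableEq α] (φ : α → α → Bool) (W : Finset α) : ℕ → Finset α
  | 0 => W.filter (fun a => φ a a = true)
  | n + 1 => csrStep φ W (lsrIter φ W n)

/-- The liberal-start-respecting rule. -/
def fLSR {α : Type*} [DecidableEq α] (φ : α → α → Bool) (W : Finset α) : Finset α :=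
  lsrIter φ W W.card

/-! Since everyone qualifies `a`, it lies in the starting set and qualifies every member of it;
each later step only adds individuals qualified by current members, so everything added is
reachable from `a`. Conversely the iterates increase inside `N` and stay constant once two
consecutive ones agree, so they cannot keep growing for `#N + 1` steps: the limit is a fixed point
of `csrStep`, hence closed under qualification, and contains everything reachable from `a`. -/

section

variable {α : Type*} [DecidableEq α] (φ : α → α → Bool) (W : Finset α)

theorem csrIter_subset_succ (n : ℕ) : csrIter φ W n ⊆ csrIter φ W (n + 1) :=
  Finset.subset_union_left

theorem csrIter_mono : Monotone (csrIter φ W) :=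
  monotone_nat_of_le_succ (csrIter_subset_succ φ W)

theorem csrIter_subset (n : ℕ) : csrIter φ W n ⊆ W := by
  induction n with
  | zero => exact Finset.filter_subset _ _
  | succ n ih => exact Finset.union_subset ih (Finset.filter_subset _ _)

theorem csrIter_succ_eq_of_eq {n : ℕ} (h : csrIter φ W n = csrIter φ W (n + 1)) :
    csrIter φ W (n + 1) = csrIter φ W (n + 2) :=
  congrArg (csrStep φ W) h

theorem succ_le_card_csrIter_of_ne {n : ℕ} (h : csrIter φ W n ≠ csrIter φ W (n + 1)) :
    n + 1 ≤ (csrIter φ W (n + 1)).card := by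
  have hlt : (csrIter φ W n).card < (csrIter φ W (n + 1)).card :=
    Finset.card_lt_card ((csrIter_subset_succ φ W n).ssubset_of_ne h)
  cases n with
  | zero => omega
  | succ n =>
    have := succ_le_card_csrIter_of_ne (n := n) fun h' => h (csrIter_succ_eq_of_eq φ W h')
    omega

theorem csrStep_fCSR : csrStep φ W (fCSR φ W) = fCSR φ W := by
  by_contra h
  have hle := succ_le_card_csrIter_of_ne φ W (n := W.card) (Ne.symm h)
  have := Finset.card_le_card (csrIter_subset φ W (W.card + 1))
  omega

theorem mem_fCSR_of_qualified {x y : α} (hx : x ∈ fCSR φ W) (hy : y ∈ W) (hxy : φ x y = true) :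
    y ∈ fCSR φ W := by
  rw [← csrStep_fCSR]
  exact Finset.mem_union_right _ (Finset.mem_filter.2 ⟨hy, x, hx, hxy⟩)

theorem mem_csrIter_zero {x : α} : x ∈ csrIter φ W 0 ↔ x ∈ W ∧ ∀ a' ∈ W, φ a' x = true :=
  Finset.mem_filter

theorem csrIter_zero_subset_fCSR : csrIter φ W 0 ⊆ fCSR φ W :=
  csrIter_mono φ W (Nat.zero_le _)

theorem exists_reflTransGen_of_mem_csrIter {n : ℕ} {x : α} (hx : x ∈ csrIter φ W n) :
    ∃ c ∈ csrIter φ W 0, Relation.ReflTransGen (fun x y => φ x y = true) c x := by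
  induction n generalizing x with
  | zero => exact ⟨x, hx, .refl⟩
  | succ n ih =>
    rcases Finset.mem_union.1 hx with hx | hx
    · exact ih hx
    · obtain ⟨-, y, hy, hyx⟩ := Finset.mem_filter.1 hx
      obtain ⟨c, hc, hcy⟩ := ih hy
      exact ⟨c, hc, hcy.tail hyx⟩

end

theorem csr_eq_reachable_from_universally_qualified
    {α : Type*} [DecidableEq α] [Fintype α] (φ : α → α → Bool) (a : α)
    (ha : ∀ b : α, φ b a = true) :
    (∀ a' : α, a' ∈ fCSR φ (Finset.univ : Finset α) ↔
        Relation.ReflTransGen (fun x y => φ x y = true) a a') ∧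
    (fCSR φ (Finset.univ : Finset α)).Nonempty ∧
    a ∈ fCSR φ (Finset.univ : Finset α) := by
  have ha_mem : a ∈ fCSR φ univ :=
    csrIter_zero_subset_fCSR φ univ ((mem_csrIter_zero φ univ).2 ⟨mem_univ a, fun b _ => ha b⟩)
  have hmem_iff (a' : α) :
      a' ∈ fCSR φ univ ↔ Relation.ReflTransGen (fun x y => φ x y = true) a a' := by
    constructor
    · intro h
      obtain ⟨c, hc, hca'⟩ := exists_reflTransGen_of_mem_csrIter φ univ h
      exact .head (((mem_csrIter_zero φ univ).1 hc).2 a (mem_univ a)) hca'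
    · intro h
      induction h with
      | refl => exact ha_mem
      | tail _ hxy ih => exact mem_fCSR_of_qualified φ univ ih (mem_univ _) hxy
  exact ⟨hmem_iff, ⟨a, ha_mem⟩, ha_mem⟩
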